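/- Let λ be a partition of n = p + q with ℓ parts. For 𝐩 = (p_1, …, p_m) ∈ P(λ;p,q), let T(𝐩) ∈ syd(λ;p,q) be the signed Young diagram whose j-th row (1 ≤ j ≤ ℓ) has leading sign + if and only if k_{s−1} < j ≤ k_{s−1} + p_s for some 1 ≤ s ≤ m (when all parts of λ are even, T((0)) is the diagram all of whose rows have leading sign −). Then every connected component of the graph Γ(λ;p,q) contains exactly one of the diagrams T(𝐩), 𝐩 ∈ P(λ;p,q); in particular the number of connected components of Γ(λ;p,q) equals #P(λ;p,q). -/

import Mathlib

/-!
Encode a diagram `T` by `f = m_T⁺` and let `U_T(x)` be its number of `+` rows of length at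
least `x`. All diagrams of signature `(p, q)` have the same number of `+` rows of odd length,
so an edge `±(e_r - e_{r+1})` joins two parts of equal parity and an edge `±e_k` needs an even
smallest part. Hence `U_T(x)` is constant on components whenever `x` exceeds the next smaller
part (or `0`) by an odd amount, i.e. for `x = λ_{k_s}`. Conversely, if `T` and `T'` agree at
these parts, then at the largest part where `m_T⁺` and `m_{T'}⁺` differ, the diagram with fewer
`+` rows there has an edge raising one of its values `U(x)` towards the other diagram; this
lowers `∑ₓ |U_T(x) - U_{T'}(x)|`, so `T` and `T'` are connected. The values `U_T(λ_{k_s})` are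
the partial sums of `p_s(T)`, the number of `+` rows among the rows `k_{s-1} < j ≤ k_s`; the
tuple `(p_s(T))` lies in `P(λ;p,q)`, and `T(𝐩)` has tuple `𝐩`.
-/

open Finset

/-- A partition of `n`, given by the function `l` listing its parts in weakly
decreasing order: `l j = λ_j` is the `j`-th part for `1 ≤ j ≤ len`, and
`l j = 0` for `j > len`. -/
structure PartitionData : Type where
  l : ℕ → ℕ
  len : ℕ
  anti : ∀ j, 1 ≤ j → l (j + 1) ≤ l j
  pos : ∀ j, 1 ≤ j → (0 < l j ↔ j ≤ len)

namespace PartitionData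

/-- The multiplicity `m(i)` of `i` as a part of the partition. -/
def mult (P : PartitionData) (i : ℕ) : ℕ :=
  ((Finset.Icc 1 P.len).filter (fun j => P.l j = i)).card

/-- The finite set of (distinct) parts of the partition. -/
def partsSet (P : PartitionData) : Finset ℕ :=
  (Finset.Icc 1 P.len).image P.l

/-- The sum of the parts (i.e. the number `n` the partition partitions). -/
def boxSum (P : PartitionData) : ℕ := ∑ j ∈ Finset.Icc 1 P.len, P.l j

/-- The number of odd parts of the partition. -/
def oddCount (P : PartitionData) : ℕ :=
  ((Finset.Icc 1 P.len).filter (fun j => Odd (P.l j))).card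

end PartitionData

/-- A signed Young diagram of shape `P` and signature `(p, q)`, encoded by the
function `f` sending each part length `i` to `m_T⁺(i)`, the number of rows of
length `i` whose leading sign is `+`.  A row of length `i` with leading sign
`+` has `(i+1)/2` plus-boxes and `i/2` minus-boxes, and vice versa. -/
structure SYD (P : PartitionData) (p q : ℕ) : Type where
  f : ℕ → ℕ
  le_mult : ∀ i, f i ≤ P.mult i
  plus_eq : ∑ i ∈ P.partsSet, (f i * ((i + 1) / 2) + (P.mult i - f i) * (i / 2)) = p
  minus_eq : ∑ i ∈ P.partsSet, (f i * (i / 2) + (P.mult i - f i) * ((i + 1) / 2)) = q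

/-- `i` and `j` are consecutive distinct parts: `i > j` with no part strictly
in between (so if the distinct parts are `i_1 > ⋯ > i_k`, the pairs are
`(i_r, i_{r+1})`). -/
def Consec (P : PartitionData) (i j : ℕ) : Prop :=
  i ∈ P.partsSet ∧ j ∈ P.partsSet ∧ j < i ∧ ∀ x ∈ P.partsSet, ¬ (j < x ∧ x < i)

/-- `j` is the smallest part `i_k`. -/
def IsMinPart (P : PartitionData) (j : ℕ) : Prop :=
  j ∈ P.partsSet ∧ ∀ x ∈ P.partsSet, j ≤ x

/-- Adjacency of signed Young diagrams with step `c`: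
`π(T) - π(T') ∈ {±c(e_r - e_{r+1})} ∪ {±c e_k}` in the coordinates indexed by
the distinct parts `i_1 > ⋯ > i_k`. -/
def AdjRel (P : PartitionData) {p q : ℕ} (c : ℕ) (T T' : SYD P p q) : Prop :=
  (∃ i j, Consec P i j ∧ (∀ x, x ≠ i → x ≠ j → T.f x = T'.f x) ∧
    ((T.f i = T'.f i + c ∧ T'.f j = T.f j + c) ∨
      (T'.f i = T.f i + c ∧ T.f j = T'.f j + c)))
  ∨ (∃ j, IsMinPart P j ∧ (∀ x, x ≠ j → T.f x = T'.f x) ∧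
      (T.f j = T'.f j + c ∨ T'.f j = T.f j + c))

/-- The orbit graph `Γ(λ;p,q)` (type AIII). -/
def orbitGraph (P : PartitionData) (p q : ℕ) : SimpleGraph (SYD P p q) :=
  SimpleGraph.fromRel (AdjRel P 1)

/-- The set `{j : 1 ≤ j ≤ ℓ, λ_j - λ_{j+1} odd}` defining `k_1 < ⋯ < k_m`. -/
def Kset (P : PartitionData) : Finset ℕ :=
  (Finset.Icc 1 P.len).filter (fun j => Odd (P.l j - P.l (j + 1)))

/-- The parameter set `P(λ;p,q)`:
tuples `(p_1, …, p_m)` with `0 ≤ p_s ≤ k_s - k_{s-1}` and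
`2·Σ_{s : λ_{k_s} odd} p_s - #(odd parts) = p - q`. -/
def Pset (P : PartitionData) (p q m : ℕ) (k : ℕ → ℕ) : Set (ℕ → ℕ) :=
  {ps | (∀ s, ¬ (1 ≤ s ∧ s ≤ m) → ps s = 0) ∧
    (∀ s, 1 ≤ s → s ≤ m → ps s ≤ k s - k (s - 1)) ∧
    2 * (∑ s ∈ (Finset.Icc 1 m).filter (fun s => 1 ≤ k s ∧ Odd (P.l (k s))),
        (ps s : ℤ)) - (P.oddCount : ℤ) = (p : ℤ) - (q : ℤ)}

open scoped Classical

/-- `m_{T(𝐩)}⁺(i)` for the representative `T(𝐩)`: the number of rows `j` of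
length `i` whose leading sign is `+`, i.e. with
`k_{s-1} < j ≤ k_{s-1} + p_s` for some `1 ≤ s ≤ m`. -/
noncomputable def fOf (P : PartitionData) (m : ℕ) (k ps : ℕ → ℕ) (i : ℕ) : ℕ :=
  ((Finset.Icc 1 P.len).filter (fun j => P.l j = i ∧
    ∃ s ∈ Finset.Icc 1 m, k (s - 1) < j ∧ j ≤ k (s - 1) + ps s)).card

namespace PartitionData

variable (P : PartitionData)

lemma l_antitone {a b : ℕ} (ha : 1 ≤ a) (hab : a ≤ b) : P.l b ≤ P.l a := by
  induction b, hab using Nat.le_induction with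
  | base => exact le_rfl
  | succ b hab ih => exact (P.anti b (ha.trans hab)).trans ih

lemma l_eq_zero {j : ℕ} (hj : P.len < j) : P.l j = 0 := by
  have := P.pos j (by omega)
  omega

lemma le_len_of_lt {r : ℕ} (hr : 1 ≤ r) (h : P.l (r + 1) < P.l r) : r ≤ P.len :=
  (P.pos r hr).1 (by omega)

lemma mem_partsSet {x : ℕ} : x ∈ P.partsSet ↔ ∃ j ∈ Icc 1 P.len, P.l j = x :=
  mem_image

lemma l_mem_partsSet {j : ℕ} (hj : j ∈ Icc 1 P.len) : P.l j ∈ P.partsSet :=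
  mem_image_of_mem _ hj

lemma pos_of_mem_partsSet {x : ℕ} (hx : x ∈ P.partsSet) : 0 < x := by
  obtain ⟨j, hj, rfl⟩ := P.mem_partsSet.1 hx
  exact (P.pos j (mem_Icc.1 hj).1).2 (mem_Icc.1 hj).2

lemma mult_pos {x : ℕ} (hx : x ∈ P.partsSet) : 0 < P.mult x := by
  obtain ⟨j, hj, rfl⟩ := P.mem_partsSet.1 hx
  exact card_pos.2 ⟨j, mem_filter.2 ⟨hj, rfl⟩⟩

lemma mult_eq_zero {x : ℕ} (hx : x ∉ P.partsSet) : P.mult x = 0 := by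
  refine card_eq_zero.2 (filter_eq_empty_iff.2 fun j hj hjx => hx ?_)
  exact hjx ▸ P.l_mem_partsSet hj

lemma le_or_le_of_mem_partsSet {r x : ℕ} (hr : 1 ≤ r) (hx : x ∈ P.partsSet) :
    P.l r ≤ x ∨ x ≤ P.l (r + 1) := by
  obtain ⟨j, hj, rfl⟩ := P.mem_partsSet.1 hx
  rcases le_or_gt j r with h | h
  · exact Or.inl (P.l_antitone (mem_Icc.1 hj).1 h)
  · exact Or.inr (P.l_antitone (by omega) h)

lemma l_lt_l {a j j' : ℕ} (hj : 1 ≤ j) (hja : j ≤ a) (haj' : a < j')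
    (ha : P.l (a + 1) < P.l a) : P.l j' < P.l j :=
  calc P.l j' ≤ P.l (a + 1) := P.l_antitone (by omega) haj'
    _ < P.l a := ha
    _ ≤ P.l j := P.l_antitone hj hja

lemma exists_lastRow {x : ℕ} (hx : x ∈ P.partsSet) :
    ∃ r, 1 ≤ r ∧ P.l r = x ∧ P.l (r + 1) < x := by
  obtain ⟨j, hj, hjx⟩ := P.mem_partsSet.1 hx
  obtain ⟨r, hr, hmax⟩ :=
    exists_max_image {j ∈ Icc 1 P.len | P.l j = x} id ⟨j, mem_filter.2 ⟨hj, hjx⟩⟩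
  obtain ⟨hr, hrx⟩ := mem_filter.1 hr
  obtain ⟨hr1, hrlen⟩ := mem_Icc.1 hr
  refine ⟨r, hr1, hrx, lt_of_le_of_ne (hrx ▸ P.anti r hr1) fun h => ?_⟩
  by_cases hlen : r + 1 ≤ P.len
  · have : r + 1 ≤ r := hmax (r + 1) (mem_filter.2 ⟨mem_Icc.2 ⟨by omega, hlen⟩, h⟩)
    omega
  · have := P.l_eq_zero (show P.len < r + 1 by omega)
    have := (P.pos r hr1).2 hrlen
    omega

lemma sum_card_filter_l (A : Finset ℕ) (c : ℕ → Prop) [DecidablePred c] :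
    ∑ x ∈ A, #{j ∈ Icc 1 P.len | P.l j = x ∧ c j} = #{j ∈ Icc 1 P.len | P.l j ∈ A ∧ c j} := by
  rw [card_eq_sum_card_fiberwise (f := P.l) (t := A) fun j hj => (mem_filter.1 hj).2.1]
  refine sum_congr rfl fun x hx => congrArg card (ext fun j => ?_)
  simp only [mem_filter]
  constructor
  · rintro ⟨hj, rfl, hc⟩
    exact ⟨⟨hj, hx, hc⟩, rfl⟩
  · rintro ⟨⟨hj, -, hc⟩, rfl⟩
    exact ⟨hj, rfl, hc⟩

lemma sum_mult (A : Finset ℕ) : ∑ x ∈ A, P.mult x = #{j ∈ Icc 1 P.len | P.l j ∈ A} := by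
  show ∑ x ∈ A, #{j ∈ Icc 1 P.len | P.l j = x} = _
  simpa only [and_true] using P.sum_card_filter_l A (fun _ => True)

lemma sum_mult_mul (g : ℕ → ℕ) :
    ∑ x ∈ P.partsSet, P.mult x * g x = ∑ j ∈ Icc 1 P.len, g (P.l j) :=
  (sum_comp g P.l).symm

lemma sum_mult_odd : ∑ x ∈ P.partsSet with Odd x, P.mult x = P.oddCount := by
  rw [sum_mult, oddCount]
  congr 1
  exact filter_congr fun j hj => by simp [P.l_mem_partsSet hj]

end PartitionData

lemma plus_boxes_row {f n x : ℕ} (h : f ≤ n) :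
    f * ((x + 1) / 2) + (n - f) * (x / 2) = n * (x / 2) + if Odd x then f else 0 := by
  obtain ⟨b, rfl⟩ := Nat.exists_eq_add_of_le h
  rw [Nat.add_sub_cancel_left]
  rcases Nat.even_or_odd' x with ⟨c, rfl | rfl⟩
  · rw [if_neg (Nat.not_odd_iff_even.2 (even_two_mul c)), show (2 * c + 1) / 2 = c by omega,
      show 2 * c / 2 = c by omega]
    ring
  · rw [if_pos (odd_two_mul_add_one c), show (2 * c + 1 + 1) / 2 = c + 1 by omega,
      show (2 * c + 1) / 2 = c by omega]
    ring

lemma minus_boxes_row {f n x : ℕ} (h : f ≤ n) :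
    f * (x / 2) + (n - f) * ((x + 1) / 2) + (if Odd x then f else 0)
      = n * (x / 2) + if Odd x then n else 0 := by
  have hplus := plus_boxes_row (x := x) (Nat.sub_le n f)
  rw [Nat.sub_sub_self h] at hplus
  have := Nat.sub_add_cancel h
  split_ifs at hplus ⊢ <;> linarith

namespace PartitionData

variable (P : PartitionData)

def halfSum : ℕ := ∑ x ∈ P.partsSet, P.mult x * (x / 2)

def oddSum (f : ℕ → ℕ) : ℕ := ∑ x ∈ P.partsSet with Odd x, f x

def plusBoxes (f : ℕ → ℕ) : ℕ :=
  ∑ i ∈ P.partsSet, (f i * ((i + 1) / 2) + (P.mult i - f i) * (i / 2))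

def minusBoxes (f : ℕ → ℕ) : ℕ :=
  ∑ i ∈ P.partsSet, (f i * (i / 2) + (P.mult i - f i) * ((i + 1) / 2))

variable {P}

lemma plusBoxes_eq {f : ℕ → ℕ} (hf : ∀ x, f x ≤ P.mult x) :
    P.plusBoxes f = P.halfSum + P.oddSum f := by
  rw [plusBoxes, halfSum, oddSum, sum_filter, ← sum_add_distrib]
  exact sum_congr rfl fun x _ => plus_boxes_row (hf x)

lemma minusBoxes_add_oddSum {f : ℕ → ℕ} (hf : ∀ x, f x ≤ P.mult x) :
    P.minusBoxes f + P.oddSum f = P.halfSum + P.oddCount := by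
  rw [minusBoxes, halfSum, oddSum, ← sum_mult_odd, sum_filter, sum_filter, ← sum_add_distrib,
    ← sum_add_distrib]
  exact sum_congr rfl fun x _ => minus_boxes_row (hf x)

variable (P)

lemma boxSum_eq : P.boxSum = 2 * P.halfSum + P.oddCount := by
  rw [boxSum, halfSum, sum_mult_mul, oddCount, card_filter, mul_sum, ← sum_add_distrib]
  refine sum_congr rfl fun j _ => ?_
  split_ifs with h
  · rw [Nat.odd_iff] at h
    omega
  · rw [Nat.not_odd_iff] at h
    omega

end PartitionData

open PartitionData

namespace SYD

variable {P : PartitionData} {p q : ℕ}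

@[ext]
lemma ext {T T' : SYD P p q} (h : T.f = T'.f) : T = T' := by
  cases T
  cases T'
  subst h
  rfl

lemma f_eq_zero (T : SYD P p q) {x : ℕ} (hx : x ∉ P.partsSet) : T.f x = 0 :=
  Nat.eq_zero_of_le_zero (P.mult_eq_zero hx ▸ T.le_mult x)

lemma halfSum_add_oddSum (T : SYD P p q) : P.halfSum + P.oddSum T.f = p :=
  (plusBoxes_eq T.le_mult).symm.trans T.plus_eq

lemma add_oddSum (T : SYD P p q) : q + P.oddSum T.f = P.halfSum + P.oddCount := by
  have h : P.minusBoxes T.f = q := T.minus_eq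
  rw [← minusBoxes_add_oddSum T.le_mult, h]

lemma oddSum_eq (T T' : SYD P p q) : P.oddSum T.f = P.oddSum T'.f := by
  have := T.halfSum_add_oddSum
  have := T'.halfSum_add_oddSum
  omega

def ofOddSum (f : ℕ → ℕ) (hf : ∀ x, f x ≤ P.mult x) (hp : P.halfSum + P.oddSum f = p)
    (hq : q + P.oddSum f = P.halfSum + P.oddCount) : SYD P p q where
  f := f
  le_mult := hf
  plus_eq := (plusBoxes_eq hf).trans hp
  minus_eq := by
    show P.minusBoxes f = q
    have := minusBoxes_add_oddSum hf
    omega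

def withOddSum (T : SYD P p q) (f : ℕ → ℕ) (hf : ∀ x, f x ≤ P.mult x)
    (h : P.oddSum f = P.oddSum T.f) : SYD P p q :=
  ofOddSum f hf (h ▸ T.halfSum_add_oddSum) (h ▸ T.add_oddSum)

end SYD

section PiSingle

variable {ι : Type*} [DecidableEq ι]

lemma add_single_eq_add_single_iff {f g : ι → ℕ} {i j : ι} (hij : i ≠ j) :
    f + Pi.single j 1 = g + Pi.single i 1 ↔
      (∀ x, x ≠ i → x ≠ j → f x = g x) ∧ f i = g i + 1 ∧ g j = f j + 1 := by
  constructor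
  · intro h
    refine ⟨fun x hi hj => ?_, ?_, ?_⟩
    · simpa [hi, hj] using congrFun h x
    · simpa [hij] using congrFun h i
    · simpa [hij.symm] using (congrFun h j).symm
  · rintro ⟨hoff, hi, hj⟩
    funext x
    by_cases hxi : x = i
    · subst hxi
      simp [hij, hi]
    · by_cases hxj : x = j
      · subst hxj
        simp [hxi, hj]
      · simp [hxi, hxj, hoff x hxi hxj]

lemma eq_add_single_iff {f g : ι → ℕ} {j : ι} :
    f = g + Pi.single j 1 ↔ (∀ x, x ≠ j → f x = g x) ∧ f j = g j + 1 := by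
  constructor
  · rintro rfl
    exact ⟨fun x hx => by simp [hx], by simp⟩
  · rintro ⟨hoff, hj⟩
    funext x
    by_cases hxj : x = j
    · subst hxj
      simp [hj]
    · simp [hxj, hoff x hxj]

lemma sum_add_single (S : Finset ι) (f : ι → ℕ) (j : ι) :
    ∑ y ∈ S, (f + Pi.single j 1 : ι → ℕ) y = ∑ y ∈ S, f y + if j ∈ S then 1 else 0 := by
  simp [sum_add_distrib]

end PiSingle

namespace PartitionData

variable (P : PartitionData)

def upperSum (f : ℕ → ℕ) (x : ℕ) : ℕ := ∑ y ∈ P.partsSet with x ≤ y, f y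

/-- The part `x` exceeds the next smaller part (or `0`, if `x` is the smallest part) by an odd
amount. -/
def IsOddDrop (x : ℕ) : Prop :=
  (IsMinPart P x ∧ Odd x) ∨ ∃ j, Consec P x j ∧ ¬(Odd x ↔ Odd j)

/-- `π(f) - π(g)` is `e_r - e_{r+1}` or `e_k`, written without subtraction. -/
def IsUpStep (f g : ℕ → ℕ) : Prop :=
  (∃ i j, Consec P i j ∧ f + Pi.single j 1 = g + Pi.single i 1) ∨
    ∃ j, IsMinPart P j ∧ f = g + Pi.single j 1

variable {P}

lemma consec_unique {i j j' : ℕ} (h : Consec P i j) (h' : Consec P i j') : j = j' := by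
  obtain ⟨-, hj, hji, hbet⟩ := h
  obtain ⟨-, hj', hji', hbet'⟩ := h'
  by_contra hne
  rcases Nat.lt_or_gt_of_ne hne with hlt | hlt
  · exact hbet j' hj' ⟨hlt, hji'⟩
  · exact hbet' j hj ⟨hlt, hji⟩

lemma exists_consec {w : ℕ} (hw : w ∈ P.partsSet) (hmin : ¬ IsMinPart P w) :
    ∃ v, Consec P w v := by
  have hne : {y ∈ P.partsSet | y < w}.Nonempty := by
    simp only [IsMinPart, hw, true_and, not_forall, not_le] at hmin
    obtain ⟨y, hy, hyw⟩ := hmin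
    exact ⟨y, mem_filter.2 ⟨hy, hyw⟩⟩
  obtain ⟨hv, hvw⟩ := mem_filter.1 (max'_mem _ hne)
  refine ⟨_, hw, hv, hvw, fun x hx hxv => ?_⟩
  have := le_max' {y ∈ P.partsSet | y < w} x (mem_filter.2 ⟨hx, hxv.2⟩)
  omega

lemma upperSum_eq_add {f : ℕ → ℕ} {x : ℕ} (hx : x ∈ P.partsSet) :
    P.upperSum f x = f x + ∑ y ∈ P.partsSet with x < y, f y := by
  rw [upperSum, ← add_sum_erase _ _ (mem_filter.2 ⟨hx, le_rfl⟩)]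
  congr 2
  ext y
  simp only [mem_erase, mem_filter]
  by_cases hy : y ∈ P.partsSet
  · simp only [hy, true_and]
    omega
  · simp only [hy, false_and, and_false]

lemma upperSum_of_consec {i j : ℕ} (hc : Consec P i j) (f : ℕ → ℕ) :
    P.upperSum f j = f j + P.upperSum f i := by
  rw [upperSum_eq_add hc.2.1, upperSum]
  congr 1
  refine sum_congr (filter_congr fun y hy => ?_) fun _ _ => rfl
  have hbet := hc.2.2.2 y hy
  have hji := hc.2.2.1
  show j < y ↔ i ≤ y
  omega

lemma upperSum_of_transfer {f g : ℕ → ℕ} {i j x : ℕ} (hc : Consec P i j)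
    (h : f + Pi.single j 1 = g + Pi.single i 1) (hx : x ∈ P.partsSet) :
    P.upperSum f x = P.upperSum g x + (Pi.single i 1 : ℕ → ℕ) x := by
  obtain ⟨hi, hj, hji, hbet⟩ := hc
  have hs := congrArg (fun φ => ∑ y ∈ P.partsSet with x ≤ y, φ y) h
  simp only [sum_add_single, mem_filter, hi, hj, true_and] at hs
  have := hbet x hx
  rw [upperSum, upperSum, Pi.single_apply]
  split_ifs at hs ⊢ <;> omega

lemma upperSum_of_raise {f g : ℕ → ℕ} {j x : ℕ} (hmin : IsMinPart P j)
    (h : f = g + Pi.single j 1) (hx : x ∈ P.partsSet) :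
    P.upperSum f x = P.upperSum g x + (Pi.single j 1 : ℕ → ℕ) x := by
  have hs := congrArg (fun φ => ∑ y ∈ P.partsSet with x ≤ y, φ y) h
  simp only [sum_add_single, mem_filter, hmin.1, true_and] at hs
  have := hmin.2 x hx
  rw [upperSum, upperSum, Pi.single_apply]
  split_ifs at hs ⊢ <;> omega

lemma oddSum_of_transfer {f g : ℕ → ℕ} {i j : ℕ} (hc : Consec P i j)
    (h : f + Pi.single j 1 = g + Pi.single i 1) :
    P.oddSum f + (if Odd j then 1 else 0) = P.oddSum g + if Odd i then 1 else 0 := by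
  have hs := congrArg (fun φ => ∑ y ∈ P.partsSet with Odd y, φ y) h
  simpa only [oddSum, sum_add_single, mem_filter, hc.1, hc.2.1, true_and] using hs

lemma oddSum_of_raise {f g : ℕ → ℕ} {j : ℕ} (hmin : IsMinPart P j)
    (h : f = g + Pi.single j 1) : P.oddSum f = P.oddSum g + if Odd j then 1 else 0 := by
  have hs := congrArg (fun φ => ∑ y ∈ P.partsSet with Odd y, φ y) h
  simpa only [oddSum, sum_add_single, mem_filter, hmin.1, true_and] using hs

lemma IsOddDrop.mem {x : ℕ} (h : IsOddDrop P x) : x ∈ P.partsSet := by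
  rcases h with ⟨hmin, -⟩ | ⟨j, hc, -⟩
  exacts [hmin.1, hc.1]

lemma not_isOddDrop_of_consec {i j : ℕ} (hc : Consec P i j) (hpar : Odd i ↔ Odd j) :
    ¬ IsOddDrop P i := by
  rintro (⟨hmin, -⟩ | ⟨j', hc', hpar'⟩)
  · exact absurd (hmin.2 j hc.2.1) (not_le.2 hc.2.2.1)
  · exact hpar' (consec_unique hc hc' ▸ hpar)

lemma not_isOddDrop_of_isMinPart {j : ℕ} (hmin : IsMinPart P j) (hj : ¬ Odd j) :
    ¬ IsOddDrop P j := by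
  rintro (⟨-, hodd⟩ | ⟨j', hc, -⟩)
  · exact hj hodd
  · exact absurd (hmin.2 j' hc.2.1) (not_le.2 hc.2.2.1)

lemma IsUpStep.ne {f g : ℕ → ℕ} (h : IsUpStep P f g) : f ≠ g := by
  rintro rfl
  rcases h with ⟨i, j, hc, h⟩ | ⟨j, -, h⟩
  · have := congrFun h i
    simp [hc.2.2.1.ne'] at this
  · have := congrFun h j
    simp at this

lemma IsUpStep.upperSum_eq {f g : ℕ → ℕ} (h : IsUpStep P f g) (hodd : P.oddSum f = P.oddSum g)
    {x : ℕ} (hx : IsOddDrop P x) : P.upperSum f x = P.upperSum g x := by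
  rcases h with ⟨i, j, hc, h⟩ | ⟨j, hmin, h⟩
  · have hpar : Odd i ↔ Odd j := by
      have := oddSum_of_transfer hc h
      by_cases hi : Odd i <;> by_cases hj : Odd j <;> simp [hi, hj, hodd] at this ⊢
    have hxi : x ≠ i := by
      rintro rfl
      exact not_isOddDrop_of_consec hc hpar hx
    simp [upperSum_of_transfer hc h hx.mem, hxi]
  · have hj : ¬ Odd j := by
      have := oddSum_of_raise hmin h
      by_contra hj
      simp [hj, hodd] at this
    have hxj : x ≠ j := by
      rintro rfl
      exact not_isOddDrop_of_isMinPart hmin hj hx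
    simp [upperSum_of_raise hmin h hx.mem, hxj]

end PartitionData

open PartitionData

namespace SYD

variable {P : PartitionData} {p q : ℕ}

lemma adjRel_iff {T T' : SYD P p q} :
    AdjRel P 1 T T' ↔ P.IsUpStep T.f T'.f ∨ P.IsUpStep T'.f T.f := by
  constructor
  · rintro (⟨i, j, hc, hoff, ⟨hi, hj⟩ | ⟨hi, hj⟩⟩ | ⟨j, hmin, hoff, hj | hj⟩)
    · exact Or.inl (Or.inl ⟨i, j, hc,
        (add_single_eq_add_single_iff hc.2.2.1.ne').2 ⟨hoff, hi, hj⟩⟩)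
    · exact Or.inr (Or.inl ⟨i, j, hc,
        (add_single_eq_add_single_iff hc.2.2.1.ne').2 ⟨fun x h1 h2 => (hoff x h1 h2).symm, hi, hj⟩⟩)
    · exact Or.inl (Or.inr ⟨j, hmin, eq_add_single_iff.2 ⟨hoff, hj⟩⟩)
    · exact Or.inr (Or.inr ⟨j, hmin, eq_add_single_iff.2 ⟨fun x h => (hoff x h).symm, hj⟩⟩)
  · rintro ((⟨i, j, hc, h⟩ | ⟨j, hmin, h⟩) | (⟨i, j, hc, h⟩ | ⟨j, hmin, h⟩))
    · obtain ⟨hoff, hi, hj⟩ := (add_single_eq_add_single_iff hc.2.2.1.ne').1 h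
      exact Or.inl ⟨i, j, hc, hoff, Or.inl ⟨hi, hj⟩⟩
    · obtain ⟨hoff, hj⟩ := eq_add_single_iff.1 h
      exact Or.inr ⟨j, hmin, hoff, Or.inl hj⟩
    · obtain ⟨hoff, hi, hj⟩ := (add_single_eq_add_single_iff hc.2.2.1.ne').1 h
      exact Or.inl ⟨i, j, hc, fun x h1 h2 => (hoff x h1 h2).symm, Or.inr ⟨hi, hj⟩⟩
    · obtain ⟨hoff, hj⟩ := eq_add_single_iff.1 h
      exact Or.inr ⟨j, hmin, fun x h => (hoff x h).symm, Or.inr hj⟩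

lemma orbitGraph_adj_iff {T T' : SYD P p q} :
    (orbitGraph P p q).Adj T T' ↔ P.IsUpStep T.f T'.f ∨ P.IsUpStep T'.f T.f := by
  rw [orbitGraph, SimpleGraph.fromRel_adj, adjRel_iff, adjRel_iff]
  constructor
  · rintro ⟨-, h | h⟩
    exacts [h, h.symm]
  · intro h
    refine ⟨fun hTT => ?_, Or.inl h⟩
    subst hTT
    rcases h with h | h <;> exact h.ne rfl

lemma upperSum_eq_of_reachable {T T' : SYD P p q} (h : (orbitGraph P p q).Reachable T T')
    {x : ℕ} (hx : P.IsOddDrop x) : P.upperSum T.f x = P.upperSum T'.f x := by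
  obtain ⟨w⟩ := h
  induction w with
  | nil => rfl
  | @cons T T'' _ hadj _ ih =>
    refine Eq.trans ?_ ih
    rcases orbitGraph_adj_iff.1 hadj with h | h
    · exact h.upperSum_eq (T.oddSum_eq T'') hx
    · exact (h.upperSum_eq (T''.oddSum_eq T) hx).symm

lemma exists_upStep_of_isMinPart (T : SYD P p q) {w : ℕ} (hmin : IsMinPart P w)
    (hw : ¬ Odd w) (hlt : T.f w < P.mult w) :
    ∃ T' : SYD P p q, P.IsUpStep T'.f T.f ∧
      ∀ x ∈ P.partsSet, P.upperSum T'.f x = P.upperSum T.f x + (Pi.single w 1 : ℕ → ℕ) x := by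
  have hle : ∀ x, (T.f + Pi.single w 1 : ℕ → ℕ) x ≤ P.mult x := fun x => by
    by_cases hx : x = w
    · subst hx
      simpa using hlt
    · simpa [hx] using T.le_mult x
  have hodd : P.oddSum (T.f + Pi.single w 1) = P.oddSum T.f := by
    simpa [hw] using oddSum_of_raise hmin rfl
  exact ⟨T.withOddSum _ hle hodd, Or.inr ⟨w, hmin, rfl⟩,
    fun x hx => upperSum_of_raise hmin rfl hx⟩

lemma exists_upStep_of_consec (T : SYD P p q) {w v : ℕ} (hc : Consec P w v)
    (hpar : Odd w ↔ Odd v) (hw : T.f w < P.mult w) (hv : 0 < T.f v) :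
    ∃ T' : SYD P p q, P.IsUpStep T'.f T.f ∧
      ∀ x ∈ P.partsSet, P.upperSum T'.f x = P.upperSum T.f x + (Pi.single w 1 : ℕ → ℕ) x := by
  have hwv : w ≠ v := hc.2.2.1.ne'
  set f := T.f + Pi.single w 1 - Pi.single v 1
  have hfw : f w = T.f w + 1 := by simp [f, hwv]
  have hfv : f v = T.f v - 1 := by simp [f, hwv.symm]
  have hfx : ∀ x, x ≠ w → x ≠ v → f x = T.f x := fun x h1 h2 => by simp [f, h1, h2]
  have hf : f + Pi.single v 1 = T.f + Pi.single w 1 :=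
    (add_single_eq_add_single_iff hwv).2 ⟨hfx, hfw, by omega⟩
  have hle : ∀ x, f x ≤ P.mult x := fun x => by
    by_cases h1 : x = w
    · rw [h1, hfw]
      exact hw
    by_cases h2 : x = v
    · rw [h2, hfv]
      exact (Nat.sub_le _ _).trans (T.le_mult v)
    · rw [hfx x h1 h2]
      exact T.le_mult x
  have hodd : P.oddSum f = P.oddSum T.f := by
    have h := oddSum_of_transfer hc hf
    by_cases ho : Odd w
    · simpa [ho, hpar.1 ho] using h
    · simpa [ho, mt hpar.2 ho] using h
  exact ⟨T.withOddSum f hle hodd, Or.inl ⟨w, v, hc, hf⟩,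
    fun x hx => upperSum_of_transfer hc hf hx⟩

end SYD

namespace SYD

variable {P : PartitionData} {p q : ℕ}

/-- Going down from `w` through parts where `T` has no `+` row, `U_T < U_{T'}` persists, so
none of them is an odd drop; the first part with a `+` row, or an even smallest part, supplies
the step. -/
lemma exists_upStep_toward {T T' : SYD P p q}
    (hdrop : ∀ x, P.IsOddDrop x → P.upperSum T.f x = P.upperSum T'.f x) {w : ℕ}
    (hw : w ∈ P.partsSet) (hU : P.upperSum T.f w < P.upperSum T'.f w)
    (hlt : T.f w < P.mult w) :
    ∃ (T'' : SYD P p q) (z : ℕ), P.IsUpStep T''.f T.f ∧ z ∈ P.partsSet ∧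
      P.upperSum T.f z < P.upperSum T'.f z ∧
      ∀ x ∈ P.partsSet, P.upperSum T''.f x = P.upperSum T.f x + (Pi.single z 1 : ℕ → ℕ) x := by
  induction w using Nat.strong_induction_on with
  | _ w ih =>
  have hwd : ¬ P.IsOddDrop w := fun h => (hdrop w h ▸ hU).false
  by_cases hmin : IsMinPart P w
  · obtain ⟨T'', hstep, hU''⟩ :=
      T.exists_upStep_of_isMinPart hmin (fun h => hwd (Or.inl ⟨hmin, h⟩)) hlt
    exact ⟨T'', w, hstep, hw, hU, hU''⟩
  obtain ⟨v, hc⟩ := exists_consec hw hmin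
  have hpar : Odd w ↔ Odd v := not_not.1 fun h => hwd (Or.inr ⟨v, hc, h⟩)
  rcases Nat.eq_zero_or_pos (T.f v) with hv | hv
  · refine ih v hc.2.2.1 hc.2.1 ?_ (hv ▸ P.mult_pos hc.2.1)
    rw [upperSum_of_consec hc, upperSum_of_consec hc, hv]
    omega
  · obtain ⟨T'', hstep, hU''⟩ := T.exists_upStep_of_consec hc hpar hlt hv
    exact ⟨T'', w, hstep, hw, hU, hU''⟩

lemma exists_top_ne {T T' : SYD P p q} (h : T ≠ T') :
    ∃ x ∈ P.partsSet, T.f x ≠ T'.f x ∧ ∀ y ∈ P.partsSet, x < y → T.f y = T'.f y := by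
  have hne : {x ∈ P.partsSet | T.f x ≠ T'.f x}.Nonempty := by
    by_contra hempty
    refine h (SYD.ext (funext fun x => ?_))
    by_cases hx : x ∈ P.partsSet
    · by_contra hfx
      exact hempty ⟨x, mem_filter.2 ⟨hx, hfx⟩⟩
    · rw [T.f_eq_zero hx, T'.f_eq_zero hx]
  obtain ⟨hx, hfx⟩ := mem_filter.1 (max'_mem _ hne)
  refine ⟨_, hx, hfx, fun y hy hxy => not_not.1 fun hfy => ?_⟩
  exact absurd (le_max' {x ∈ P.partsSet | T.f x ≠ T'.f x} y (mem_filter.2 ⟨hy, hfy⟩))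
    (not_le.2 hxy)

end SYD

namespace PartitionData

variable (P : PartitionData)

def upperSumDist (f g : ℕ → ℕ) : ℕ :=
  ∑ x ∈ P.partsSet, Nat.dist (P.upperSum f x) (P.upperSum g x)

variable {P}

lemma upperSumDist_comm (f g : ℕ → ℕ) : P.upperSumDist f g = P.upperSumDist g f :=
  sum_congr rfl fun _ _ => Nat.dist_comm _ _

lemma upperSumDist_lt {f g h : ℕ → ℕ} {z : ℕ} (hz : z ∈ P.partsSet)
    (hlt : P.upperSum g z < P.upperSum h z)
    (hf : ∀ x ∈ P.partsSet, P.upperSum f x = P.upperSum g x + (Pi.single z 1 : ℕ → ℕ) x) :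
    P.upperSumDist f h < P.upperSumDist g h := by
  refine sum_lt_sum (fun x hx => ?_) ⟨z, hz, ?_⟩
  · rw [hf x hx, Pi.single_apply]
    split_ifs with hxz
    · subst hxz
      simp only [Nat.dist]
      omega
    · rw [add_zero]
  · rw [hf z hz, Pi.single_eq_same]
    simp only [Nat.dist]
    omega

end PartitionData

namespace SYD

variable {P : PartitionData} {p q : ℕ}

theorem reachable_of_upperSum_eq {T T' : SYD P p q}
    (h : ∀ x, P.IsOddDrop x → P.upperSum T.f x = P.upperSum T'.f x) :
    (orbitGraph P p q).Reachable T T' := by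
  induction hn : P.upperSumDist T.f T'.f using Nat.strong_induction_on generalizing T T' with
  | _ n ih =>
  by_cases hTT : T = T'
  · exact hTT ▸ SimpleGraph.Reachable.refl _
  obtain ⟨x, hx, hne, habove⟩ := exists_top_ne hTT
  wlog hlt : T.f x < T'.f x generalizing T T'
  · refine (this (fun y hy => (h y hy).symm) (upperSumDist_comm _ _ ▸ hn) (Ne.symm hTT)
      (Ne.symm hne) (fun y hy hxy => (habove y hy hxy).symm) (by omega)).symm
  have hU : P.upperSum T.f x < P.upperSum T'.f x := by
    have habove' : ∑ y ∈ P.partsSet with x < y, T.f y = ∑ y ∈ P.partsSet with x < y, T'.f y :=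
      sum_congr rfl fun y hy => habove y (mem_filter.1 hy).1 (mem_filter.1 hy).2
    rw [upperSum_eq_add hx, upperSum_eq_add hx, habove']
    omega
  obtain ⟨T'', z, hstep, hz, hzlt, hU''⟩ :=
    exists_upStep_toward h hx hU (hlt.trans_le (T'.le_mult x))
  have h'' : ∀ y, P.IsOddDrop y → P.upperSum T''.f y = P.upperSum T'.f y := fun y hy => by
    have hyz : y ≠ z := by
      rintro rfl
      exact (h y hy ▸ hzlt).false
    rw [hU'' y hy.mem, Pi.single_eq_of_ne hyz, add_zero, h y hy]
  exact (orbitGraph_adj_iff.2 (Or.inr hstep)).reachable.trans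
    (ih _ (hn ▸ upperSumDist_lt hz hzlt hU'') h'' rfl)

end SYD

namespace PartitionData

variable {P : PartitionData}

lemma mem_Kset_iff {r : ℕ} : r ∈ Kset P ↔ r ∈ Icc 1 P.len ∧ Odd (P.l r - P.l (r + 1)) :=
  mem_filter

lemma one_le_of_mem_Kset {r : ℕ} (hr : r ∈ Kset P) : 1 ≤ r :=
  (mem_Icc.1 (mem_Kset_iff.1 hr).1).1

lemma le_len_of_mem_Kset {r : ℕ} (hr : r ∈ Kset P) : r ≤ P.len :=
  (mem_Icc.1 (mem_Kset_iff.1 hr).1).2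

lemma l_succ_lt_of_mem_Kset {r : ℕ} (hr : r ∈ Kset P) : P.l (r + 1) < P.l r :=
  Nat.lt_of_sub_pos (mem_Kset_iff.1 hr).2.pos

lemma isOddDrop_l_iff {r : ℕ} (hr : 1 ≤ r) (hdrop : P.l (r + 1) < P.l r) :
    P.IsOddDrop (P.l r) ↔ r ∈ Kset P := by
  have hrlen := P.le_len_of_lt hr hdrop
  have hx : P.l r ∈ P.partsSet := P.l_mem_partsSet (mem_Icc.2 ⟨hr, hrlen⟩)
  rw [mem_Kset_iff, Nat.odd_sub hdrop.le]
  simp only [mem_Icc, hr, hrlen, and_self, true_and]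
  by_cases hlast : r + 1 ≤ P.len
  · have hy : P.l (r + 1) ∈ P.partsSet := P.l_mem_partsSet (mem_Icc.2 ⟨by omega, hlast⟩)
    have hc : Consec P (P.l r) (P.l (r + 1)) := ⟨hx, hy, hdrop, fun z hz hbet => by
      rcases P.le_or_le_of_mem_partsSet hr hz with h | h <;> omega⟩
    rw [← Nat.not_odd_iff_even]
    constructor
    · rintro (⟨hmin, -⟩ | ⟨j, hc', hpar⟩)
      · exact absurd (hmin.2 _ hy) (not_le.2 hdrop)
      · obtain rfl := consec_unique hc hc'
        tauto
    · exact fun h => Or.inr ⟨_, hc, by tauto⟩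
  · have hmin : IsMinPart P (P.l r) := ⟨hx, fun z hz => by
      rcases P.le_or_le_of_mem_partsSet hr hz with h | h
      · exact h
      · have := P.l_eq_zero (show P.len < r + 1 by omega)
        have := P.pos_of_mem_partsSet hz
        omega⟩
    rw [P.l_eq_zero (show P.len < r + 1 by omega)]
    simp only [Even.zero, iff_true]
    constructor
    · rintro (⟨-, h⟩ | ⟨j, hc, -⟩)
      · exact h
      · exact absurd (hmin.2 j hc.2.1) (not_le.2 hc.2.2.1)
    · exact fun h => Or.inl ⟨hmin, h⟩

lemma isOddDrop_iff {x : ℕ} : P.IsOddDrop x ↔ ∃ r ∈ Kset P, P.l r = x := by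
  constructor
  · intro hx
    obtain ⟨r, hr, rfl, hdrop⟩ := P.exists_lastRow hx.mem
    exact ⟨r, (isOddDrop_l_iff hr hdrop).1 hx, rfl⟩
  · rintro ⟨r, hr, rfl⟩
    exact (isOddDrop_l_iff (one_le_of_mem_Kset hr) (l_succ_lt_of_mem_Kset hr)).2 hr

lemma odd_l_iff_of_notMem_Kset {r : ℕ} (hr : 1 ≤ r) (h : r ∉ Kset P) :
    Odd (P.l r) ↔ Odd (P.l (r + 1)) := by
  by_cases hrlen : r ≤ P.len
  · have := P.anti r hr
    rw [mem_Kset_iff, Nat.odd_sub this, ← Nat.not_odd_iff_even] at h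
    simp only [mem_Icc, hr, hrlen, and_self, true_and] at h
    tauto
  · rw [P.l_eq_zero (by omega), P.l_eq_zero (by omega)]

lemma odd_l_iff_of_forall_notMem_Kset {a b : ℕ} (ha : 1 ≤ a) (hab : a ≤ b)
    (h : ∀ r, a ≤ r → r < b → r ∉ Kset P) : Odd (P.l a) ↔ Odd (P.l b) := by
  induction b, hab using Nat.le_induction with
  | base => rfl
  | succ b hab ih =>
    exact (ih fun r h1 h2 => h r h1 (by omega)).trans
      (odd_l_iff_of_notMem_Kset (by omega) (h b hab (by omega)))

end PartitionData

namespace PartitionData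

variable (P : PartitionData)

def rowParts (r : ℕ) : Finset ℕ := (Icc 1 r).image P.l

/-- This counts the `+` rows among the first `r` rows only if no later row has length `λ_r`,
as for `r = 0` and `r ∈ Kset P`. -/
def prefixSum (f : ℕ → ℕ) (r : ℕ) : ℕ := ∑ x ∈ P.rowParts r, f x

variable {P}

@[simp]
lemma prefixSum_zero (f : ℕ → ℕ) : P.prefixSum f 0 = 0 := by
  simp [prefixSum, rowParts]

lemma prefixSum_mono (f : ℕ → ℕ) {a b : ℕ} (hab : a ≤ b) : P.prefixSum f a ≤ P.prefixSum f b :=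
  sum_le_sum_of_subset (image_subset_image (Icc_subset_Icc_right hab))

lemma rowParts_eq_filter {r : ℕ} (hr : 1 ≤ r) (hdrop : P.l (r + 1) < P.l r) :
    P.rowParts r = {x ∈ P.partsSet | P.l r ≤ x} := by
  have hrlen := P.le_len_of_lt hr hdrop
  ext x
  simp only [rowParts, mem_image, mem_filter, mem_Icc]
  constructor
  · rintro ⟨j, ⟨hj1, hjr⟩, rfl⟩
    exact ⟨P.l_mem_partsSet (mem_Icc.2 ⟨hj1, hjr.trans hrlen⟩), P.l_antitone hj1 hjr⟩
  · rintro ⟨hx, hrx⟩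
    obtain ⟨j, hj, rfl⟩ := P.mem_partsSet.1 hx
    refine ⟨j, ⟨(mem_Icc.1 hj).1, not_lt.1 fun hrj => ?_⟩, rfl⟩
    have := P.l_antitone (by omega : 1 ≤ r + 1) hrj
    omega

lemma prefixSum_eq_upperSum (f : ℕ → ℕ) {r : ℕ} (hr : r ∈ Kset P) :
    P.prefixSum f r = P.upperSum f (P.l r) := by
  rw [prefixSum, rowParts_eq_filter (one_le_of_mem_Kset hr) (l_succ_lt_of_mem_Kset hr), upperSum]

lemma sum_rowParts (g : ℕ → ℕ) {a b : ℕ} (ha : a = 0 ∨ a ∈ Kset P) (hab : a ≤ b) :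
    ∑ x ∈ P.rowParts b, g x = ∑ x ∈ P.rowParts a, g x + ∑ x ∈ (Ioc a b).image P.l, g x := by
  have hunion : P.rowParts b = P.rowParts a ∪ (Ioc a b).image P.l := by
    rw [rowParts, rowParts, ← image_union]
    congr 1
    ext j
    simp only [mem_union, mem_Icc, mem_Ioc]
    omega
  refine hunion ▸ sum_union (disjoint_left.2 fun x hxa hxb => ?_)
  obtain ⟨j, hj, rfl⟩ := mem_image.1 hxa
  obtain ⟨j', hj', hjj'⟩ := mem_image.1 hxb
  obtain ⟨hj1, hja⟩ := mem_Icc.1 hj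
  obtain ⟨haj', -⟩ := mem_Ioc.1 hj'
  rcases ha with rfl | ha
  · omega
  · exact (P.l_lt_l hj1 hja haj' (l_succ_lt_of_mem_Kset ha)).ne hjj'

lemma l_mem_image_Ioc_iff {a b j : ℕ} (ha : a = 0 ∨ a ∈ Kset P) (hb : b = 0 ∨ b ∈ Kset P)
    (hj : 1 ≤ j) : P.l j ∈ (Ioc a b).image P.l ↔ j ∈ Ioc a b := by
  refine ⟨fun h => ?_, mem_image_of_mem _⟩
  obtain ⟨j', hj', hjj'⟩ := mem_image.1 h
  obtain ⟨haj', hj'b⟩ := mem_Ioc.1 hj'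
  refine mem_Ioc.2 ⟨not_le.1 fun hja => ?_, not_lt.1 fun hbj => ?_⟩
  · rcases ha with rfl | ha
    · omega
    · exact (P.l_lt_l hj hja haj' (l_succ_lt_of_mem_Kset ha)).ne hjj'
  · rcases hb with rfl | hb
    · omega
    · exact (P.l_lt_l (by omega) hj'b hbj (l_succ_lt_of_mem_Kset hb)).ne hjj'.symm

lemma sum_card_image_Ioc {a b : ℕ} (ha : a = 0 ∨ a ∈ Kset P) (hb : b = 0 ∨ b ∈ Kset P)
    (c : ℕ → Prop) [DecidablePred c] :
    ∑ x ∈ (Ioc a b).image P.l, #{j ∈ Icc 1 P.len | P.l j = x ∧ c j} = #{j ∈ Ioc a b | c j} := by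
  rw [sum_card_filter_l]
  congr 1
  ext j
  simp only [mem_filter]
  constructor
  · rintro ⟨hj, hjab, hc⟩
    exact ⟨(l_mem_image_Ioc_iff ha hb (mem_Icc.1 hj).1).1 hjab, hc⟩
  · rintro ⟨hjab, hc⟩
    have hblen : b ≤ P.len := by
      rcases hb with rfl | hb
      · exact Nat.zero_le _
      · exact le_len_of_mem_Kset hb
    have hj : j ∈ Icc 1 P.len := by grind
    exact ⟨hj, (l_mem_image_Ioc_iff ha hb (mem_Icc.1 hj).1).2 hjab, hc⟩

lemma sum_mult_image_Ioc {a b : ℕ} (ha : a = 0 ∨ a ∈ Kset P) (hb : b = 0 ∨ b ∈ Kset P) :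
    ∑ x ∈ (Ioc a b).image P.l, P.mult x = b - a := by
  have := sum_card_image_Ioc ha hb (fun _ => True)
  simp only [and_true, filter_true, Nat.card_Ioc] at this
  exact this

end PartitionData

/-- Repetitions are allowed so that the case of even parts only (`k 1 = k 0 = 0`) is covered
too. -/
structure EnumeratesKset (P : PartitionData) (m : ℕ) (k : ℕ → ℕ) : Prop where
  zero : k 0 = 0
  mono : ∀ {a b}, a ≤ b → b ≤ m → k a ≤ k b
  mem : ∀ s ≤ m, k s = 0 ∨ k s ∈ Kset P
  cover : ∀ r ∈ Kset P, ∃ s ≤ m, k s = r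

/-- The invariant `𝐩(T)`: the number of `+` rows among the rows `k_{s-1} < j ≤ k_s`. -/
def plusProfile (P : PartitionData) (m : ℕ) (k : ℕ → ℕ) (f : ℕ → ℕ) (s : ℕ) : ℕ :=
  if 1 ≤ s ∧ s ≤ m then P.prefixSum f (k s) - P.prefixSum f (k (s - 1)) else 0

namespace EnumeratesKset

variable {P : PartitionData} {m : ℕ} {k : ℕ → ℕ}

lemma plusProfile_eq_sum (hk : EnumeratesKset P m k) (f : ℕ → ℕ) {s : ℕ} (hs1 : 1 ≤ s)
    (hs : s ≤ m) :
    plusProfile P m k f s = ∑ x ∈ (Ioc (k (s - 1)) (k s)).image P.l, f x := by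
  rw [plusProfile, if_pos ⟨hs1, hs⟩, prefixSum, prefixSum,
    sum_rowParts f (hk.mem (s - 1) (by omega)) (hk.mono (Nat.sub_le s 1) hs)]
  omega

lemma plusProfile_le (hk : EnumeratesKset P m k) {f : ℕ → ℕ} (hf : ∀ x, f x ≤ P.mult x) {s : ℕ}
    (hs1 : 1 ≤ s) (hs : s ≤ m) :
    plusProfile P m k f s ≤ k s - k (s - 1) := by
  rw [hk.plusProfile_eq_sum f hs1 hs, ← sum_mult_image_Ioc (hk.mem _ (by omega)) (hk.mem s hs)]
  exact sum_le_sum fun x _ => hf x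

lemma plusProfile_eq_iff (hk : EnumeratesKset P m k) {f g : ℕ → ℕ} :
    plusProfile P m k f = plusProfile P m k g ↔
      ∀ s ≤ m, P.prefixSum f (k s) = P.prefixSum g (k s) := by
  constructor
  · intro h s hs
    induction s with
    | zero => simp [hk.zero]
    | succ s ih =>
      have hf := prefixSum_mono (P := P) f (hk.mono (Nat.le_add_right s 1) hs)
      have hg := prefixSum_mono (P := P) g (hk.mono (Nat.le_add_right s 1) hs)
      have := congrFun h (s + 1)
      simp only [plusProfile, Nat.add_sub_cancel, if_pos (⟨by omega, hs⟩ : 1 ≤ s + 1 ∧ s + 1 ≤ m)]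
        at this
      have := ih (by omega)
      omega
  · intro h
    funext s
    simp only [plusProfile]
    split_ifs with hs
    · rw [h s hs.2, h (s - 1) (by omega)]
    · rfl

lemma prefixSum_eq_iff (hk : EnumeratesKset P m k) {f g : ℕ → ℕ} :
    (∀ s ≤ m, P.prefixSum f (k s) = P.prefixSum g (k s)) ↔
      ∀ x, P.IsOddDrop x → P.upperSum f x = P.upperSum g x := by
  constructor
  · intro h x hx
    obtain ⟨r, hr, rfl⟩ := isOddDrop_iff.1 hx
    obtain ⟨s, hs, rfl⟩ := hk.cover r hr
    rw [← prefixSum_eq_upperSum f hr, ← prefixSum_eq_upperSum g hr, h s hs]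
  · intro h s hs
    rcases hk.mem s hs with h0 | hks
    · simp [h0]
    · rw [prefixSum_eq_upperSum f hks, prefixSum_eq_upperSum g hks,
        h _ (isOddDrop_iff.2 ⟨_, hks, rfl⟩)]

lemma odd_l_iff (hk : EnumeratesKset P m k) {s j : ℕ} (hs1 : 1 ≤ s) (hs : s ≤ m)
    (hj : j ∈ Ioc (k (s - 1)) (k s)) :
    Odd (P.l j) ↔ Odd (P.l (k s)) := by
  obtain ⟨hj1, hj2⟩ := mem_Ioc.1 hj
  refine odd_l_iff_of_forall_notMem_Kset (by omega) hj2 fun r hjr hrk hr => ?_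
  obtain ⟨s', hs', rfl⟩ := hk.cover r hr
  rcases le_or_gt s' (s - 1) with h | h
  · have := hk.mono h (by omega)
    omega
  · have := hk.mono (show s ≤ s' by omega) hs'
    omega

lemma not_odd_l (hk : EnumeratesKset P m k) {j : ℕ} (hj : k m < j) : ¬ Odd (P.l j) := by
  by_cases hjlen : j ≤ P.len
  · rw [odd_l_iff_of_forall_notMem_Kset (b := P.len + 1) (by omega) (by omega) fun r hjr _ hr => ?_,
      P.l_eq_zero (by omega)]
    · exact Nat.not_odd_zero
    · obtain ⟨s', hs', rfl⟩ := hk.cover r hr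
      have := hk.mono hs' le_rfl
      omega
  · rw [P.l_eq_zero (by omega)]
    exact Nat.not_odd_zero

lemma sum_plusProfile_filter_odd (hk : EnumeratesKset P m k) (f : ℕ → ℕ) {t : ℕ} (ht : t ≤ m) :
    ∑ s ∈ Icc 1 t with 1 ≤ k s ∧ Odd (P.l (k s)), plusProfile P m k f s
      = ∑ x ∈ P.rowParts (k t) with Odd x, f x := by
  induction t with
  | zero => simp [hk.zero, rowParts]
  | succ t ih =>
    rw [sum_filter, sum_Icc_succ_top (by omega), ← sum_filter, ih (by omega), sum_filter,
      sum_filter, sum_rowParts _ (hk.mem t (by omega)) (hk.mono (Nat.le_add_right t 1) ht),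
      hk.plusProfile_eq_sum f (by omega) ht, Nat.add_sub_cancel]
    congr 1
    split_ifs with hodd
    · refine sum_congr rfl fun x hx => ?_
      obtain ⟨j, hj, rfl⟩ := mem_image.1 hx
      rw [if_pos ((hk.odd_l_iff (by omega) ht (by simpa using hj)).2 hodd.2)]
    · refine (sum_eq_zero fun x hx => ?_).symm
      obtain ⟨j, hj, rfl⟩ := mem_image.1 hx
      have hjt := (hk.odd_l_iff (by omega) ht (by simpa using hj))
      have := mem_Ioc.1 hj
      rw [if_neg fun h => hodd ⟨by omega, hjt.1 h⟩]

lemma sum_plusProfile_eq_oddSum (hk : EnumeratesKset P m k) (f : ℕ → ℕ) :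
    ∑ s ∈ Icc 1 m with 1 ≤ k s ∧ Odd (P.l (k s)), plusProfile P m k f s = P.oddSum f := by
  rw [hk.sum_plusProfile_filter_odd f le_rfl, oddSum]
  congr 1
  ext x
  simp only [mem_filter, rowParts, mem_image, mem_Icc, and_congr_left_iff]
  intro hx
  rw [P.mem_partsSet]
  constructor
  · rintro ⟨j, ⟨hj1, hjk⟩, rfl⟩
    rcases hk.mem m le_rfl with h0 | hkm
    · omega
    · exact ⟨j, mem_Icc.2 ⟨hj1, hjk.trans (le_len_of_mem_Kset hkm)⟩, rfl⟩
  · rintro ⟨j, hj, rfl⟩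
    exact ⟨j, ⟨(mem_Icc.1 hj).1, not_lt.1 fun h => hk.not_odd_l h hx⟩, rfl⟩

end EnumeratesKset

lemma fOf_le_mult (P : PartitionData) (m : ℕ) (k ps : ℕ → ℕ) (i : ℕ) :
    fOf P m k ps i ≤ P.mult i :=
  card_le_card fun j hj => by
    simp only [mem_filter] at hj ⊢
    exact ⟨hj.1, hj.2.1⟩

namespace EnumeratesKset

variable {P : PartitionData} {m : ℕ} {k : ℕ → ℕ}

lemma plusProfile_fOf (hk : EnumeratesKset P m k) {ps : ℕ → ℕ}
    (h0 : ∀ s, ¬ (1 ≤ s ∧ s ≤ m) → ps s = 0)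
    (hle : ∀ s, 1 ≤ s → s ≤ m → ps s ≤ k s - k (s - 1)) :
    plusProfile P m k (fOf P m k ps) = ps := by
  funext s
  by_cases hs : 1 ≤ s ∧ s ≤ m
  · rw [hk.plusProfile_eq_sum _ hs.1 hs.2]
    refine (@sum_card_image_Ioc _ _ _ (hk.mem _ (by omega)) (hk.mem s hs.2) _
      fun _ => Classical.propDecidable _).trans ?_
    have hblock : ∀ s' ∈ Icc 1 m, k (s' - 1) ≤ k s' ∧ ps s' ≤ k s' - k (s' - 1) := fun s' h's =>
      ⟨hk.mono (Nat.sub_le s' 1) (mem_Icc.1 h's).2, hle s' (mem_Icc.1 h's).1 (mem_Icc.1 h's).2⟩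
    refine (congrArg card (ext fun j => ?_ : _ = Ioc (k (s - 1)) (k (s - 1) + ps s))).trans
      (by simp)
    simp only [mem_filter, mem_Ioc]
    constructor
    · rintro ⟨⟨hj1, hj2⟩, s', hs', hj3, hj4⟩
      obtain ⟨hk', hps'⟩ := hblock s' hs'
      obtain ⟨hs'1, hs'm⟩ := mem_Icc.1 hs'
      rcases lt_trichotomy s' s with h | rfl | h
      · have := hk.mono (show s' ≤ s - 1 by omega) (by omega)
        omega
      · exact ⟨hj3, hj4⟩
      · have := hk.mono (show s ≤ s' - 1 by omega) (by omega)
        omega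
    · rintro ⟨hj1, hj2⟩
      obtain ⟨hk', hps'⟩ := hblock s (mem_Icc.2 hs)
      exact ⟨⟨hj1, by omega⟩, s, mem_Icc.2 hs, hj1, hj2⟩
  · rw [plusProfile, if_neg hs, h0 s hs]

lemma plusProfile_mem_Pset (hk : EnumeratesKset P m k) {p q : ℕ} (T : SYD P p q) :
    plusProfile P m k T.f ∈ Pset P p q m k := by
  refine ⟨fun s hs => if_neg hs, fun s hs1 hs => hk.plusProfile_le T.le_mult hs1 hs, ?_⟩
  have := hk.sum_plusProfile_eq_oddSum T.f
  have := T.halfSum_add_oddSum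
  have := T.add_oddSum
  rw [← Nat.cast_sum]
  omega

lemma reachable_iff (hk : EnumeratesKset P m k) {p q : ℕ} {T T' : SYD P p q} :
    (orbitGraph P p q).Reachable T T' ↔ plusProfile P m k T.f = plusProfile P m k T'.f := by
  rw [hk.plusProfile_eq_iff, hk.prefixSum_eq_iff]
  exact ⟨fun h x hx => SYD.upperSum_eq_of_reachable h hx, SYD.reachable_of_upperSum_eq⟩

end EnumeratesKset

namespace SYD

variable {P : PartitionData} {p q m : ℕ} {k : ℕ → ℕ}

/-- The representative `T(𝐩)`. -/
noncomputable def ofPset (hn : P.boxSum = p + q) (hk : EnumeratesKset P m k)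
    (ps : Pset P p q m k) : SYD P p q :=
  have hodd : P.oddSum (fOf P m k ps) = ∑ s ∈ Icc 1 m with 1 ≤ k s ∧ Odd (P.l (k s)), ps.1 s := by
    rw [← hk.sum_plusProfile_eq_oddSum, hk.plusProfile_fOf ps.2.1 ps.2.2.1]
  have hsum := ps.2.2.2
  have hbox := P.boxSum_eq
  ofOddSum (fOf P m k ps) (fOf_le_mult P m k ps) (by rw [← Nat.cast_sum] at hsum; omega)
    (by rw [← Nat.cast_sum] at hsum; omega)

lemma plusProfile_ofPset (hn : P.boxSum = p + q) (hk : EnumeratesKset P m k)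
    (ps : Pset P p q m k) : plusProfile P m k (ofPset hn hk ps).f = ps :=
  hk.plusProfile_fOf ps.2.1 ps.2.2.1

lemma mem_range_ofPset (hn : P.boxSum = p + q) (hk : EnumeratesKset P m k) {T : SYD P p q} :
    T ∈ Set.range (ofPset hn hk) ↔ ∃ ps ∈ Pset P p q m k, ∀ i, T.f i = fOf P m k ps i := by
  constructor
  · rintro ⟨⟨ps, hps⟩, rfl⟩
    exact ⟨ps, hps, fun i => rfl⟩
  · rintro ⟨ps, hps, h⟩
    exact ⟨⟨ps, hps⟩, SYD.ext (funext fun i => (h i).symm)⟩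

end SYD

theorem SimpleGraph.existsUnique_and_card_connectedComponent {V α : Type*} (G : SimpleGraph V)
    {S : Set α} (inv : V → α) (rep : S → V) (hmem : ∀ v, inv v ∈ S) (hrep : ∀ a, inv (rep a) = a)
    (hreach : ∀ v w, G.Reachable v w ↔ inv v = inv w) :
    (∀ c : G.ConnectedComponent, ∃! v, v ∈ Set.range rep ∧ G.connectedComponentMk v = c) ∧
      Nat.card G.ConnectedComponent = S.ncard := by
  have hmk : ∀ v, G.connectedComponentMk (rep ⟨inv v, hmem v⟩) = G.connectedComponentMk v :=
    fun v => ConnectedComponent.sound ((hreach _ _).2 (hrep _))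
  have hinj : Function.Injective fun a => G.connectedComponentMk (rep a) := fun a b h =>
    Subtype.ext (by simpa only [hrep] using (hreach _ _).1 (ConnectedComponent.exact h))
  refine ⟨fun c => ?_, ?_⟩
  · induction c using ConnectedComponent.ind with | h v => ?_
    refine ⟨rep ⟨inv v, hmem v⟩, ⟨⟨_, rfl⟩, hmk v⟩, ?_⟩
    rintro _ ⟨⟨a, rfl⟩, ha⟩
    exact congrArg rep (hinj (ha.trans (hmk v).symm))
  · have hbij : Function.Bijective fun a => G.connectedComponentMk (rep a) :=
      ⟨hinj, fun c => by induction c using ConnectedComponent.ind with | h v => exact ⟨_, hmk v⟩⟩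
    rw [← Nat.card_coe_set_eq, Nat.card_congr (Equiv.ofBijective _ hbij)]

lemma enumeratesKset_of {P : PartitionData} {m : ℕ} {k : ℕ → ℕ} (hk0 : k 0 = 0)
    (hk : (Kset P = ∅ ∧ m = 1 ∧ k 1 = 0) ∨
      (Kset P ≠ ∅ ∧ StrictMonoOn k (Set.Icc 0 m) ∧ (Finset.Icc 1 m).image k = Kset P)) :
    EnumeratesKset P m k := by
  rcases hk with ⟨hK, rfl, hk1⟩ | ⟨-, hmono, him⟩
  · have hzero : ∀ s ≤ 1, k s = 0 := fun s hs => by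
      interval_cases s
      exacts [hk0, hk1]
    exact ⟨hk0, fun hab hb => (hzero _ (hab.trans hb)).trans_le (Nat.zero_le _),
      fun s hs => Or.inl (hzero s hs), fun r hr => by simp [hK] at hr⟩
  · refine ⟨hk0, fun hab hb => hmono.monotoneOn ⟨Nat.zero_le _, hab.trans hb⟩
      ⟨Nat.zero_le _, hb⟩ hab, fun s hs => ?_, fun r hr => ?_⟩
    · rcases Nat.eq_zero_or_pos s with rfl | hs1
      · exact Or.inl hk0
      · exact Or.inr (him ▸ mem_image_of_mem k (mem_Icc.2 ⟨hs1, hs⟩))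
    · obtain ⟨s, hs, rfl⟩ := mem_image.1 (him ▸ hr)
      exact ⟨s, (mem_Icc.1 hs).2, rfl⟩

/-- Every connected component of `Γ(λ;p,q)` contains exactly one of the
representatives `T(𝐩)`, `𝐩 ∈ P(λ;p,q)`; in particular the number of connected
components equals `#P(λ;p,q)`. -/
theorem stmt5 (P : PartitionData) (p q m : ℕ) (k : ℕ → ℕ)
    (hn : P.boxSum = p + q) (hk0 : k 0 = 0)
    (hk : (Kset P = ∅ ∧ m = 1 ∧ k 1 = 0) ∨
      (Kset P ≠ ∅ ∧ StrictMonoOn k (Set.Icc 0 m) ∧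
        (Finset.Icc 1 m).image k = Kset P)) :
    (∀ c : (orbitGraph P p q).ConnectedComponent,
      ∃! T : SYD P p q,
        (∃ ps ∈ Pset P p q m k, ∀ i, T.f i = fOf P m k ps i) ∧
          (orbitGraph P p q).connectedComponentMk T = c) ∧
    Nat.card (orbitGraph P p q).ConnectedComponent = (Pset P p q m k).ncard := by
  have hk' := enumeratesKset_of hk0 hk
  obtain ⟨hunique, hcard⟩ := (orbitGraph P p q).existsUnique_and_card_connectedComponent
    (fun T => plusProfile P m k T.f) (SYD.ofPset hn hk') hk'.plusProfile_mem_Pset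
    (SYD.plusProfile_ofPset hn hk') fun _ _ => hk'.reachable_iff
  exact ⟨fun c => (existsUnique_congr fun T =>
    and_congr_left' (SYD.mem_range_ofPset hn hk')).1 (hunique c), hcard⟩
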